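/- arXiv:2201.11010 — 2 statements merged into one kernel-verified Lean document; each statement's English description precedes it below -/
import Mathlib

section
/- Let g, a₁ be bijections of a set ∂, where g has fixed-point set exactly {g⁺, g⁻} and a₁ has fixed-point set exactly {a₁⁺, a₁⁻}, with {g⁺,g⁻} ∩ {a₁⁺,a₁⁻} = ∅. Assume every nonzero power of a₁ also has fixed-point set exactly {a₁⁺, a₁⁻}. Then either {a₁·g⁺, a₁·g⁻} ∩ {g⁺, g⁻} = ∅ or {a₁²·g⁺, a₁²·g⁻} ∩ {g⁺, g⁻} = ∅. -/
/-! Points outside the common fixed-point set of the nonzero powers of `a` have no period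
`1`, `2` or `3`. If `a` maps `{x, y}` into itself somewhere, say `a x = y`, then
`a² '' {x, y} = {a y, a² y}`, and `a y = x`, `a y = y`, `a² y = x`, `a² y = y` would give `x` or `y`
period `2`, `1`, `3`, `2` respectively. -/

open Function

section Iterate

variable {α : Type*} {f : α → α} {x y : α}

theorem disjoint_pair_iterate_two_of_apply_eq
    (hx : ∀ n, 0 < n → n ≤ 3 → ¬IsPeriodicPt f n x)
    (hy : ∀ n, 0 < n → n ≤ 3 → ¬IsPeriodicPt f n y) (hxy : f x = y) :
    Disjoint ({f^[2] x, f^[2] y} : Set α) {x, y} := by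
  have hfy_x : f y ≠ x := by
    simpa [IsPeriodicPt, IsFixedPt, hxy] using hx 2
  have hfy_y : f y ≠ y := by
    simpa [IsPeriodicPt, IsFixedPt] using hy 1
  have hffy_x : f (f y) ≠ x := by
    simpa [IsPeriodicPt, IsFixedPt, hxy] using hx 3
  have hffy_y : f (f y) ≠ y := by
    simpa [IsPeriodicPt, IsFixedPt] using hy 2
  simp only [iterate_succ, comp_apply, hxy, Set.disjoint_insert_right,
    Set.mem_insert_iff, Set.mem_singleton_iff, not_or, Set.disjoint_singleton_right]
  exact ⟨⟨hfy_x.symm, hffy_x.symm⟩, hfy_y.symm, hffy_y.symm⟩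

theorem disjoint_pair_image_or_iterate_two
    (hx : ∀ n, 0 < n → n ≤ 3 → ¬IsPeriodicPt f n x)
    (hy : ∀ n, 0 < n → n ≤ 3 → ¬IsPeriodicPt f n y) :
    Disjoint ({f x, f y} : Set α) {x, y} ∨
      Disjoint ({f^[2] x, f^[2] y} : Set α) {x, y} := by
  by_cases hxy : f x = y
  · exact .inr (disjoint_pair_iterate_two_of_apply_eq hx hy hxy)
  by_cases hyx : f y = x
  · right
    rw [Set.pair_comm, Set.pair_comm x]
    exact disjoint_pair_iterate_two_of_apply_eq hy hx hyx
  have hfx : f x ≠ x := by simpa [IsPeriodicPt, IsFixedPt] using hx 1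
  have hfy : f y ≠ y := by simpa [IsPeriodicPt, IsFixedPt] using hy 1
  left
  simp only [Set.disjoint_insert_right, Set.mem_insert_iff, Set.mem_singleton_iff, not_or,
    Set.disjoint_singleton_right]
  exact ⟨⟨hfx.symm, Ne.symm hyx⟩, Ne.symm hxy, hfy.symm⟩

end Iterate

theorem Equiv.Perm.not_isPeriodicPt_of_fixedPoints_zpow_eq {D : Type*} {a : Equiv.Perm D}
    {F : Set D} (hF : ∀ n : ℤ, n ≠ 0 → fixedPoints ((a ^ n : Equiv.Perm D) : D → D) = F)
    {x : D} (hx : x ∉ F) {n : ℕ} (hn : 0 < n) : ¬IsPeriodicPt a n x := by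
  intro hper
  apply hx
  rw [← hF n (by exact_mod_cast hn.ne'), zpow_natCast, Equiv.Perm.coe_pow]
  exact hper

theorem stmt_13_general {D : Type*} (a : Equiv.Perm D) (gp gm ap am : D)
    (hapow : ∀ n : ℤ, n ≠ 0 → Function.fixedPoints ((a ^ n : Equiv.Perm D) : D → D)
      = {ap, am})
    (hdisj : ({gp, gm} : Set D) ∩ {ap, am} = ∅) :
    ({a gp, a gm} : Set D) ∩ {gp, gm} = ∅ ∨
      ({(a ^ 2 : Equiv.Perm D) gp, (a ^ 2 : Equiv.Perm D) gm} : Set D) ∩ {gp, gm} = ∅ := by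
  have hdisj' := Set.disjoint_iff_inter_eq_empty.mpr hdisj
  have hgp : gp ∉ ({ap, am} : Set D) := Set.disjoint_left.mp hdisj' (by simp)
  have hgm : gm ∉ ({ap, am} : Set D) := Set.disjoint_left.mp hdisj' (by simp)
  simp only [← Set.disjoint_iff_inter_eq_empty, Equiv.Perm.coe_pow]
  exact disjoint_pair_image_or_iterate_two
    (fun _ hn _ => a.not_isPeriodicPt_of_fixedPoints_zpow_eq hapow hgp hn)
    (fun _ hn _ => a.not_isPeriodicPt_of_fixedPoints_zpow_eq hapow hgm hn)

/-- Let `g, a₁` be bijections of a set `∂` with fixed-point sets exactly `{g⁺, g⁻}`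
and `{a₁⁺, a₁⁻}` respectively, these sets being disjoint, where every nonzero power of
`a₁` also has fixed-point set exactly `{a₁⁺, a₁⁻}`. Then either
`{a₁·g⁺, a₁·g⁻} ∩ {g⁺, g⁻} = ∅` or `{a₁²·g⁺, a₁²·g⁻} ∩ {g⁺, g⁻} = ∅`. -/
theorem stmt_13 {D : Type*} (g a : Equiv.Perm D) (gp gm ap am : D)
    (hgfix : Function.fixedPoints g = {gp, gm}) (hgp : gp ≠ gm)
    (hap : ap ≠ am)
    (hapow : ∀ n : ℤ, n ≠ 0 → Function.fixedPoints ((a ^ n : Equiv.Perm D) : D → D)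
      = {ap, am})
    (hdisj : ({gp, gm} : Set D) ∩ {ap, am} = ∅) :
    ({a gp, a gm} : Set D) ∩ {gp, gm} = ∅ ∨
      ({(a ^ 2 : Equiv.Perm D) gp, (a ^ 2 : Equiv.Perm D) gm} : Set D) ∩ {gp, gm} = ∅ :=
  stmt_13_general a gp gm ap am hapow hdisj
end

section
/- Let G, Q be groups with a surjective homomorphism p : G → Q with kernel R, and suppose the monodromy φ : Q → Out(R) (induced by conjugation in G) has infinite image. Suppose Λ = C_G(R) maps isomorphically under p onto ker φ, and assume there is an injective homomorphism ψ : G → (G/Λ) × (G/R) given by g ↦ (gΛ, gR) whose image has finite index. Then one obtains a contradiction; i.e., under these hypotheses the image of φ must be finite. -/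
/-- The inner automorphism group `Inn(R) = (MulAut.conj).range` is normal in `Aut(R)`. -/
instance innNormal (R : Type*) [Group R] : ((MulAut.conj : R →* MulAut R).range).Normal := by
  constructor
  rintro x ⟨r, rfl⟩ f
  refine ⟨f r, ?_⟩
  ext s
  simp only [MulAut.conj_apply, MulAut.mul_apply, MulAut.inv_def,
    MulEquiv.apply_symm_apply, map_mul, map_inv]

/-- The outer automorphism group `Out(R) = Aut(R)/Inn(R)`. -/
def Out (R : Type*) [Group R] :=
  MulAut R ⧸ ((MulAut.conj : R →* MulAut R).range)

noncomputable instance (R : Type*) [Group R] : Group (Out R) :=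
  QuotientGroup.Quotient.group _

/-- The homomorphism `G → Out(R)` sending `g` to the class of the conjugation
automorphism `r ↦ g r g⁻¹` of a normal subgroup `R ⊴ G`. -/
noncomputable def conjOut {G : Type*} [Group G] (R : Subgroup G) [R.Normal] :
    G →* Out ↥R :=
  (QuotientGroup.mk' _).comp (MulAut.conjNormal (H := R))

lemma conjOut_ker_le {G : Type*} [Group G] (R : Subgroup G) [R.Normal] :
    R ≤ (conjOut R).ker := by
  intro r hr
  have hmem : MulAut.conjNormal (H := R) r ∈ (MulAut.conj : ↥R →* MulAut ↥R).range :=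
    ⟨⟨r, hr⟩, by ext s; simp [MulAut.conjNormal_apply, MulAut.conj_apply]⟩
  show (QuotientGroup.mk' _).comp (MulAut.conjNormal (H := R)) r = 1
  rw [MonoidHom.comp_apply, QuotientGroup.mk'_apply]
  exact (QuotientGroup.eq_one_iff _).mpr hmem

/-- The monodromy homomorphism `φ : G/R → Out(R)` induced by conjugation. -/
noncomputable def monodromy {G : Type*} [Group G] (R : Subgroup G) [R.Normal] :
    G ⧸ R →* Out ↥R :=
  QuotientGroup.lift R (conjOut R) (conjOut_ker_le R)

/-- The centralizer of a normal subgroup is normal. -/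
instance centNormal {G : Type*} [Group G] (R : Subgroup G) [R.Normal] :
    (Subgroup.centralizer (R : Set G)).Normal := by
  constructor
  intro l hl g
  rw [Subgroup.mem_centralizer_iff] at hl ⊢
  intro r hr
  have h2 := hl (g⁻¹ * r * g)
    (by simpa [mul_assoc] using Subgroup.Normal.conj_mem ‹R.Normal› r hr g⁻¹)
  have h3 : g * (g⁻¹ * r * g * l) * g⁻¹ = g * (l * (g⁻¹ * r * g)) * g⁻¹ := by rw [h2]
  calc r * (g * l * g⁻¹) = g * (g⁻¹ * r * g * l) * g⁻¹ := by group
    _ = g * (l * (g⁻¹ * r * g)) * g⁻¹ := h3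
    _ = g * l * g⁻¹ * r := by group

/-! The fibre of the image of `ψ` over `1 ∈ G/Λ` is `π(Λ) = ker φ`, so finite index of the
image of `ψ` makes `ker φ` of finite index in `G/R`, i.e. `φ(G/R)` finite. -/

theorem MonoidHom.comap_inr_range_prod {G A B : Type*} [Group G] [Group A] [Group B]
    (f : G →* A) (g : G →* B) :
    (f.prod g).range.comap (MonoidHom.inr A B) = f.ker.map g := by
  ext b
  constructor
  · rintro ⟨x, hx⟩
    exact ⟨x, congrArg Prod.fst hx, congrArg Prod.snd hx⟩
  · rintro ⟨x, hx, rfl⟩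
    exact ⟨x, Prod.ext hx rfl⟩

instance Subgroup.finiteIndex_comap {G G' : Type*} [Group G] [Group G'] (H : Subgroup G)
    [H.FiniteIndex] (f : G' →* G) : (H.comap f).FiniteIndex :=
  ⟨by rw [Subgroup.index_comap]; exact Subgroup.FiniteIndex.index_ne_zero⟩

theorem MonoidHom.finite_range_of_finiteIndex_ker {G H : Type*} [Group G] [Group H]
    (f : G →* H) [f.ker.FiniteIndex] : Finite f.range :=
  Finite.of_equiv _ (QuotientGroup.quotientKerEquivRange f).toEquiv

theorem stmt_17_general {G : Type*} [Group G] (R : Subgroup G) [R.Normal]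
    (hφinf : Infinite (monodromy R).range)
    (himg : (Subgroup.centralizer (R : Set G)).map (QuotientGroup.mk' R) =
      (monodromy R).ker)
    (hψfin : ((QuotientGroup.mk' (Subgroup.centralizer (R : Set G))).prod
        (QuotientGroup.mk' R)).range.FiniteIndex) :
    False := by
  have : (monodromy R).ker.FiniteIndex := by
    rw [← himg, ← QuotientGroup.ker_mk' (Subgroup.centralizer (R : Set G)),
      ← MonoidHom.comap_inr_range_prod]
    infer_instance
  have := (monodromy R).finite_range_of_finiteIndex_ker
  exact not_finite (monodromy R).range

/-- Suppose `R ⊴ G` has trivial center, the monodromy `φ : G/R → Out(R)` has infinite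
image, the centralizer `Λ = C_G(R)` maps isomorphically under `π : G → G/R` onto
`ker φ`, and the natural homomorphism `ψ : G → (G/Λ) × (G/R)`, `g ↦ (gΛ, gR)`, is
injective with finite-index image. Then we obtain a contradiction: the image of `φ`
must in fact be finite. -/
theorem stmt_17 {G : Type*} [Group G] (R : Subgroup G) [R.Normal]
    (hZ : Subgroup.center ↥R = ⊥)
    (hφinf : Infinite (monodromy R).range)
    (hinj : Function.Injective
      (fun l : Subgroup.centralizer (R : Set G) => QuotientGroup.mk' R (l : G)))
    (himg : (Subgroup.centralizer (R : Set G)).map (QuotientGroup.mk' R) =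
      (monodromy R).ker)
    (hψinj : Function.Injective
      ((QuotientGroup.mk' (Subgroup.centralizer (R : Set G))).prod
        (QuotientGroup.mk' R)))
    (hψfin : ((QuotientGroup.mk' (Subgroup.centralizer (R : Set G))).prod
        (QuotientGroup.mk' R)).range.FiniteIndex) :
    False :=
  stmt_17_general R hφinf himg hψfin
end
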